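/- Let G be a finite connected simple graph with positive real edge weights, and for each pair of vertices fix a minimum-weight path P(x, y) between them. For each vertex z and each edge e = {x, y}, let C(z, e) be the closed walk formed by P(z, x), the edge e, and P(y, z). Then the set of all such C(z, e) that are simple cycles contains a minimum-weight cycle basis of G (Horton's theorem). -/

import Mathlib

open SimpleGraph

variable {V : Type*} [Fintype V] [DecidableEq V]

/-- The edge set of a (simple, unoriented) cycle of a graph `H`, as a finset of edges. -/
def IsCycleEdgeSet (H : SimpleGraph V) (F : Finset (Sym2 V)) : Prop :=
  ∃ (v : V) (c : H.Walk v v), c.IsCycle ∧ F = c.edges.toFinset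

/-- The incidence (indicator) vector of a finite set of edges, over `GF(2)`. -/
def edgeIndicator (F : Finset (Sym2 V)) : Sym2 V → ZMod 2 :=
  fun e => if e ∈ F then 1 else 0

/-- The cycle space of `G` over `GF(2)`: the span of the indicator vectors of
the edge sets of cycles of `G`. -/
def cycleSpace (G : SimpleGraph V) : Submodule (ZMod 2) (Sym2 V → ZMod 2) :=
  Submodule.span (ZMod 2) {f | ∃ F : Finset (Sym2 V), IsCycleEdgeSet G F ∧ f = edgeIndicator F}

/-- A cycle basis of `G`: a finite set of edge sets of cycles of `G` whose indicator vectors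
are linearly independent over `GF(2)` and span the cycle space of `G`. -/
def IsCycleBasis (G : SimpleGraph V) (B : Finset (Finset (Sym2 V))) : Prop :=
  (∀ F ∈ B, IsCycleEdgeSet G F) ∧
  LinearIndependent (ZMod 2) (fun F : B => edgeIndicator (F : Finset (Sym2 V))) ∧
  Submodule.span (ZMod 2) (edgeIndicator '' (B : Set (Finset (Sym2 V)))) = cycleSpace G

/-- The weight of a finite set of cycles (given as edge sets): the sum over the cycles of the
sum of the weights of their edges. -/
def basisWeight (ω : Sym2 V → ℝ) (B : Finset (Finset (Sym2 V))) : ℝ :=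
  ∑ F ∈ B, ∑ e ∈ F, ω e

/-- The weight of a walk: the sum of the weights of its edges. -/
def walkWeight {G : SimpleGraph V} (ω : Sym2 V → ℝ) {u v : V} (p : G.Walk u v) : ℝ :=
  (p.edges.map ω).sum

/-- The closed walk `C(z, e)` of Horton, for `e = {x, y}`: the walk `P z x`, followed by the
edge `e`, followed by the walk `P y z`. -/
def hortonWalk {G : SimpleGraph V} (P : ∀ x y : V, G.Walk x y) (z x y : V)
    (h : G.Adj x y) : G.Walk z z :=
  (P z x).append (SimpleGraph.Walk.cons h (P y z))

/-!
By induction on `W`, every cycle `C` of weight `W` is a sum of Horton cycles of weight at most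
`W`. Closed walks lighter than `W`, and Horton walks of weight at most `W` that are not simple,
split into strictly lighter cycles and are covered by the induction hypothesis. Fixing a vertex
`z` of `C` and sweeping along `C`, each edge `e = {x, y}` is replaced by `C(z, e)`; what remains
are the closed walks `P z x` followed by `P x z`, which are handled the same way. An exchange
argument then turns a minimum-weight cycle basis into one made of Horton cycles, trading each
non-Horton cycle for a Horton cycle that is no heavier.
-/

section Exchange

open Submodule Set

variable {ι K M R : Type*} [DivisionRing K] [AddCommGroup M] [Module K M] {v : ι → M}

theorem LinearIndepOn.exchange {s : Set ι} (hs : LinearIndepOn K v s) {i j : ι} (hi : i ∈ s)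
    (hj : v j ∈ span K (v '' s)) (hj' : v j ∉ span K (v '' (s \ {i}))) :
    LinearIndepOn K v (insert j (s \ {i})) ∧
      span K (v '' insert j (s \ {i})) = span K (v '' s) := by
  have hs_eq : v '' s = insert (v i) (v '' (s \ {i})) := by
    rw [← image_insert_eq, insert_sdiff_singleton, insert_eq_of_mem hi]
  refine ⟨(hs.mono sdiff_subset).insert hj', le_antisymm ?_ ?_⟩
  · rw [image_insert_eq, span_le, insert_subset_iff]
    exact ⟨hj, (image_mono sdiff_subset).trans subset_span⟩
  · rw [hs_eq, image_insert_eq, span_le, insert_subset_iff]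
    exact ⟨mem_span_insert_exchange (hs_eq ▸ hj) hj', (subset_insert _ _).trans subset_span⟩

variable [DecidableEq ι] [AddCommMonoid R] [PartialOrder R] [IsOrderedAddMonoid R]

/-- Induction on the number of members outside `T`: each step exchanges one of them for a
member of `T` that is no heavier. -/
theorem LinearIndepOn.exists_subset_sum_le_of_mem_span (w : ι → R) (T : Set ι) :
    ∀ B : Finset ι, LinearIndepOn K v B → (∀ j ∈ T, v j ∈ span K (v '' B)) →
      (∀ i ∈ B, v i ∈ span K (v '' {j | j ∈ T ∧ w j ≤ w i})) →
      ∃ B' : Finset ι, (B' : Set ι) ⊆ T ∧ LinearIndepOn K v B' ∧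
        span K (v '' B') = span K (v '' B) ∧ ∑ i ∈ B', w i ≤ ∑ i ∈ B, w i := by
  classical
  intro B
  induction hn : (B.filter (· ∉ T)).card using Nat.strong_induction_on generalizing B with
  | _ n ih =>
  intro hB hT hspan
  by_cases hBT : (B : Set ι) ⊆ T
  · exact ⟨B, hBT, hB, rfl, le_rfl⟩
  obtain ⟨i, hiB, hiT⟩ := not_subset.mp hBT
  obtain ⟨j, ⟨hjT, hji⟩, hj⟩ :
      ∃ j ∈ {j | j ∈ T ∧ w j ≤ w i}, v j ∉ span K (v '' ((B : Set ι) \ {i})) := by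
    by_contra! h
    exact hB.notMem_span hiB (span_le.mpr (image_subset_iff.mpr h) (hspan i hiB))
  have hjB : j ∉ B.erase i := fun hjB =>
    hj (subset_span (mem_image_of_mem v (by simpa [and_comm] using hjB)))
  obtain ⟨hind, hspan_eq⟩ := hB.exchange hiB (hT j hjT) hj
  rw [← Finset.coe_erase, ← Finset.coe_insert] at hind hspan_eq
  have hcard : ((insert j (B.erase i)).filter (· ∉ T)).card < n := by
    rw [← hn, Finset.filter_insert, if_neg (not_not.mpr hjT), Finset.filter_erase]
    exact Finset.card_erase_lt_of_mem (Finset.mem_filter.mpr ⟨hiB, hiT⟩)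
  obtain ⟨B', hB'T, hB'ind, hB'span, hB'w⟩ := ih _ hcard _ rfl hind (hspan_eq ▸ hT) (by
    intro k hk
    rcases Finset.mem_insert.mp hk with rfl | hk
    · exact subset_span (mem_image_of_mem v ⟨hjT, le_rfl⟩)
    · exact hspan k (Finset.mem_of_mem_erase hk))
  refine ⟨B', hB'T, hB'ind, hB'span.trans hspan_eq, hB'w.trans ?_⟩
  rw [Finset.sum_insert hjB, ← Finset.add_sum_erase B w hiB]
  exact add_le_add_left hji _

end Exchange

namespace SimpleGraph.Walk

section Parity

variable {V : Type*} [DecidableEq V] {G : SimpleGraph V}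

def edgeParity {u v : V} (p : G.Walk u v) : Sym2 V → ZMod 2 :=
  fun e => (p.edges.count e : ZMod 2)

@[simp]
theorem edgeParity_nil {u : V} : (nil : G.Walk u u).edgeParity = 0 := by
  funext e
  simp [edgeParity]

theorem edgeParity_cons {u v w : V} (h : G.Adj u v) (p : G.Walk v w) :
    (cons h p).edgeParity = Pi.single s(u, v) 1 + p.edgeParity := by
  funext e
  by_cases he : e = s(u, v)
  · subst he
    simp [edgeParity, add_comm]
  · simp [edgeParity, he, Ne.symm he]

theorem edgeParity_append {u v w : V} (p : G.Walk u v) (q : G.Walk v w) :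
    (p.append q).edgeParity = p.edgeParity + q.edgeParity := by
  funext e
  simp [edgeParity]

theorem edgeParity_reverse {u v : V} (p : G.Walk u v) : p.reverse.edgeParity = p.edgeParity := by
  funext e
  simp [edgeParity]

theorem edgeParity_eq_zero_of_length_lt_three {u : V} (p : G.Walk u u) (hp : p.length < 3) :
    p.edgeParity = 0 := by
  match p, hp with
  | .nil, _ => exact edgeParity_nil
  | .cons h .nil, _ => exact (h.ne rfl).elim
  | .cons h (.cons h' .nil), _ =>
    rw [edgeParity_cons, edgeParity_cons, edgeParity_nil, add_zero, Sym2.eq_swap]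
    exact ZModModule.add_self _
  | .cons _ (.cons _ (.cons _ _)), hp => simp at hp; omega

theorem exists_eq_append_of_mem_support_tail {u v : V} {p : G.Walk u v}
    (hu : u ∈ p.support.tail) :
    ∃ (c : G.Walk u u) (q : G.Walk u v), ¬c.Nil ∧ p = c.append q := by
  cases p with
  | nil => simp at hu
  | cons h r =>
    rw [support_cons, List.tail_cons] at hu
    exact ⟨cons h (r.takeUntil u hu), r.dropUntil u hu, not_nil_cons, by
      rw [cons_append, take_spec]⟩

theorem exists_eq_append_append_of_two_le_count {u v b : V} {p : G.Walk u v}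
    (hb : 2 ≤ p.support.count b) :
    ∃ (p₁ : G.Walk u b) (c : G.Walk b b) (p₂ : G.Walk b v),
      ¬c.Nil ∧ p = p₁.append (c.append p₂) := by
  have hbp : b ∈ p.support := List.count_pos_iff.mp (by omega)
  have hcount := congrArg (List.count b) (support_append (p.takeUntil b hbp) (p.dropUntil b hbp))
  rw [take_spec, List.count_append, count_support_takeUntil_eq_one] at hcount
  have hb' : b ∈ (p.dropUntil b hbp).support.tail := List.count_pos_iff.mp (by omega)
  obtain ⟨c, p₂, hc, hdrop⟩ := exists_eq_append_of_mem_support_tail hb'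
  exact ⟨p.takeUntil b hbp, c, p₂, hc, by rw [← hdrop, take_spec]⟩

end Parity

end SimpleGraph.Walk

section Weight

variable {V : Type*} {G : SimpleGraph V} (ω : Sym2 V → ℝ)

@[simp]
theorem walkWeight_nil {u : V} : walkWeight ω (Walk.nil : G.Walk u u) = 0 := by
  simp [walkWeight]

theorem walkWeight_cons {u v w : V} (h : G.Adj u v) (p : G.Walk v w) :
    walkWeight ω (Walk.cons h p) = ω s(u, v) + walkWeight ω p := by
  simp [walkWeight]

theorem walkWeight_append {u v w : V} (p : G.Walk u v) (q : G.Walk v w) :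
    walkWeight ω (p.append q) = walkWeight ω p + walkWeight ω q := by
  simp [walkWeight]

theorem walkWeight_reverse {u v : V} (p : G.Walk u v) :
    walkWeight ω p.reverse = walkWeight ω p := by
  simp [walkWeight]

theorem SimpleGraph.Walk.IsTrail.walkWeight_eq [DecidableEq V] {u v : V} {p : G.Walk u v}
    (hp : p.IsTrail) : walkWeight ω p = ∑ e ∈ p.edges.toFinset, ω e :=
  (List.sum_toFinset ω hp.edges_nodup).symm

variable {ω}

theorem walkWeight_nonneg (hω : ∀ e ∈ G.edgeSet, 0 ≤ ω e) {u v : V} (p : G.Walk u v) :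
    0 ≤ walkWeight ω p :=
  List.sum_nonneg (by simpa using fun e he => hω e (p.edges_subset_edgeSet he))

theorem walkWeight_pos (hω : ∀ e ∈ G.edgeSet, 0 < ω e) {u v : V} {p : G.Walk u v}
    (hp : ¬p.Nil) : 0 < walkWeight ω p := by
  obtain ⟨w, h, q, rfl⟩ := Walk.not_nil_iff.mp hp
  rw [walkWeight_cons]
  exact add_pos_of_pos_of_nonneg (hω _ h) (walkWeight_nonneg (fun e he => (hω e he).le) q)

theorem walkWeight_bypass_le [DecidableEq V] (hω : ∀ e ∈ G.edgeSet, 0 ≤ ω e) {u v : V}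
    (p : G.Walk u v) : walkWeight ω p.bypass ≤ walkWeight ω p :=
  (p.edges_bypass_sublist_edges.map ω).sum_le_sum
    (by simpa using fun e he => hω e (p.edges_subset_edgeSet he))

theorem walkWeight_le_of_forall_isPath [DecidableEq V] (hω : ∀ e ∈ G.edgeSet, 0 ≤ ω e)
    {u v : V} {p : G.Walk u v}
    (hp : ∀ q : G.Walk u v, q.IsPath → walkWeight ω p ≤ walkWeight ω q)
    (q : G.Walk u v) : walkWeight ω p ≤ walkWeight ω q :=
  (hp _ q.bypass_isPath).trans (walkWeight_bypass_le hω q)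

end Weight

section Decomposition

open SimpleGraph.Walk

variable {V : Type*} [DecidableEq V] {G : SimpleGraph V} {ω : Sym2 V → ℝ}

/-- Cut `R` at a repeated vertex into two strictly lighter closed walks; without a repeated
vertex, a closed walk that is not a cycle has length at most two and zero edge vector. -/
theorem edgeParity_mem_of_not_isCycle (hω : ∀ e ∈ G.edgeSet, 0 < ω e)
    {S : Submodule (ZMod 2) (Sym2 V → ZMod 2)} {W : ℝ}
    (hS : ∀ (v : V) (c : G.Walk v v), c.IsCycle → walkWeight ω c < W → c.edgeParity ∈ S)
    {u : V} (R : G.Walk u u) (hR : ¬R.IsCycle) (hRW : walkWeight ω R ≤ W) :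
    R.edgeParity ∈ S := by
  induction hn : R.length using Nat.strong_induction_on generalizing u R with
  | _ n ih =>
  have hpiece : ∀ {v : V} (X : G.Walk v v), X.length < n → walkWeight ω X < walkWeight ω R →
      X.edgeParity ∈ S := fun X hXn hXR => by
    by_cases hX : X.IsCycle
    · exact hS _ X hX (hXR.trans_le hRW)
    · exact ih _ hXn X hX (hXR.le.trans hRW) rfl
  cases R with
  | nil => simp
  | cons h rest =>
    by_cases hrest : rest.support.Nodup
    · have hlen : (cons h rest).length < 3 := by
        by_contra! hlen
        exact hR (isCycle_iff_isPath_tail_and_le_length.mpr ⟨by simpa [isPath_def], hlen⟩)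
      rw [edgeParity_eq_zero_of_length_lt_three _ hlen]
      exact S.zero_mem
    obtain ⟨b, hb⟩ : ∃ b, 1 < rest.support.count b := by
      simpa [List.nodup_iff_count_le_one] using hrest
    obtain ⟨p₁, c, p₂, hc, rfl⟩ := exists_eq_append_append_of_two_le_count hb
    set R' := cons h (p₁.append p₂)
    have hparity :
        (cons h (p₁.append (c.append p₂))).edgeParity = R'.edgeParity + c.edgeParity := by
      simp only [R', edgeParity_cons, edgeParity_append]
      abel
    have hweight : walkWeight ω (cons h (p₁.append (c.append p₂))) =
        walkWeight ω R' + walkWeight ω c := by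
      simp only [R', walkWeight_cons, walkWeight_append]
      ring
    have hlength : n = R'.length + c.length := by
      simp only [← hn, R', length_cons, length_append]
      omega
    have hR'len : 0 < R'.length := Nat.succ_pos _
    have hclen : 0 < c.length := not_nil_iff_lt_length.mp hc
    have hR' := walkWeight_pos hω (not_nil_cons : ¬R'.Nil)
    have hc' := walkWeight_pos hω hc
    rw [hparity]
    exact S.add_mem (hpiece R' (by omega) (by linarith)) (hpiece c (by omega) (by linarith))

end Decomposition

section Horton

open SimpleGraph.Walk Submodule

variable {V : Type*} [DecidableEq V] {G : SimpleGraph V}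

theorem SimpleGraph.Walk.IsTrail.edgeParity_eq {u v : V} {p : G.Walk u v} (hp : p.IsTrail) :
    p.edgeParity = edgeIndicator p.edges.toFinset := by
  funext e
  by_cases he : e ∈ p.edges
  · simp [edgeParity, edgeIndicator, List.count_eq_one_of_mem hp.edges_nodup he, he]
  · simp [edgeParity, edgeIndicator, List.count_eq_zero_of_not_mem he, he]

theorem edgeIndicator_mem_cycleSpace {F : Finset (Sym2 V)} (hF : IsCycleEdgeSet G F) :
    edgeIndicator F ∈ cycleSpace G :=
  subset_span ⟨F, hF, rfl⟩

def IsHortonCycle (P : ∀ x y : V, G.Walk x y) (F : Finset (Sym2 V)) : Prop :=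
  ∃ (z x y : V) (h : G.Adj x y),
    (hortonWalk P z x y h).IsCycle ∧ F = (hortonWalk P z x y h).edges.toFinset

theorem IsHortonCycle.isCycleEdgeSet {P : ∀ x y : V, G.Walk x y} {F : Finset (Sym2 V)}
    (hF : IsHortonCycle P F) : IsCycleEdgeSet G F :=
  let ⟨z, _, _, _, hc, hF⟩ := hF
  ⟨z, _, hc, hF⟩

def hortonSpan (ω : Sym2 V → ℝ) (P : ∀ x y : V, G.Walk x y) (W : ℝ) :
    Submodule (ZMod 2) (Sym2 V → ZMod 2) :=
  span (ZMod 2) (edgeIndicator '' {F | IsHortonCycle P F ∧ ∑ e ∈ F, ω e ≤ W})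

variable {ω : Sym2 V → ℝ} {P : ∀ x y : V, G.Walk x y}

theorem hortonSpan_mono {W W' : ℝ} (h : W ≤ W') : hortonSpan ω P W ≤ hortonSpan ω P W' :=
  span_mono (Set.image_mono fun _ hF => ⟨hF.1, hF.2.trans h⟩)

theorem edgeParity_hortonWalk_mem_hortonSpan {z x y : V} {h : G.Adj x y} {W : ℝ}
    (hc : (hortonWalk P z x y h).IsCycle) (hW : walkWeight ω (hortonWalk P z x y h) ≤ W) :
    (hortonWalk P z x y h).edgeParity ∈ hortonSpan ω P W := by
  rw [hc.isTrail.edgeParity_eq]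
  rw [hc.isTrail.walkWeight_eq] at hW
  exact subset_span ⟨_, ⟨⟨z, x, y, h, hc, rfl⟩, hW⟩, rfl⟩

section Sweep

variable {S : Submodule (ZMod 2) (Sym2 V → ZMod 2)} {W : ℝ}

/-- `P z u` and `P u z` need not be reverses of each other. Peeling the last edge `{w, u}` off
`P z u` writes the sum of their edge vectors as that of the Horton walk `C(z, {w, u})` plus that
of a closed walk strictly lighter than `P z u` followed by `P u z`. -/
theorem edgeParity_add_edgeParity_mem (hω : ∀ e ∈ G.edgeSet, 0 < ω e)
    (hP : ∀ (x y : V) (q : G.Walk x y), walkWeight ω (P x y) ≤ walkWeight ω q)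
    (hlight : ∀ (v : V) (R : G.Walk v v), walkWeight ω R < W → R.edgeParity ∈ S)
    (hhorton : ∀ (z x y : V) (h : G.Adj x y),
      walkWeight ω (hortonWalk P z x y h) ≤ W → (hortonWalk P z x y h).edgeParity ∈ S)
    (z u : V) (hW : walkWeight ω (P z u) + walkWeight ω (P u z) ≤ W) :
    (P z u).edgeParity + (P u z).edgeParity ∈ S := by
  by_cases hzu : u = z
  · subst hzu
    rw [ZModModule.add_self]
    exact S.zero_mem
  obtain ⟨w, h, r, hr⟩ := not_nil_iff.mp (not_nil_of_ne hzu : ¬(P z u).reverse.Nil)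
  have hparity : (P z u).edgeParity = Pi.single s(u, w) 1 + r.edgeParity := by
    rw [← edgeParity_reverse, hr, edgeParity_cons]
  have hweight : walkWeight ω (P z u) = ω s(u, w) + walkWeight ω r := by
    rw [← walkWeight_reverse, hr, walkWeight_cons]
  have hzw : walkWeight ω (P z w) ≤ walkWeight ω r := by
    simpa [walkWeight_reverse] using hP z w r.reverse
  have huz : walkWeight ω (P z u) ≤ walkWeight ω (P u z) := by
    simpa [walkWeight_reverse] using hP z u (P u z).reverse
  have hωe : 0 < ω s(u, w) := hω _ h
  have hT := hhorton z w u h.symm (by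
    rw [hortonWalk, walkWeight_append, walkWeight_cons, Sym2.eq_swap]
    linarith)
  have hL := hlight z ((P z w).append r) (by rw [walkWeight_append]; linarith)
  convert S.add_mem hT hL using 1
  rw [hortonWalk, edgeParity_append, edgeParity_cons, edgeParity_append, hparity, Sym2.eq_swap]
  linear_combination -ZModModule.add_self (P z w).edgeParity

/-- Sweep along `q`, trading each edge `{a, c}` for the Horton walk `C(z, {a, c})`. -/
theorem edgeParity_add_add_mem (hω : ∀ e ∈ G.edgeSet, 0 < ω e)
    (hP : ∀ (x y : V) (q : G.Walk x y), walkWeight ω (P x y) ≤ walkWeight ω q)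
    (hlight : ∀ (v : V) (R : G.Walk v v), walkWeight ω R < W → R.edgeParity ∈ S)
    (hhorton : ∀ (z x y : V) (h : G.Adj x y),
      walkWeight ω (hortonWalk P z x y h) ≤ W → (hortonWalk P z x y h).edgeParity ∈ S)
    (z : V) {a b : V} (q : G.Walk a b)
    (hW : walkWeight ω (P z a) + walkWeight ω q + walkWeight ω (P b z) ≤ W) :
    (P z a).edgeParity + q.edgeParity + (P b z).edgeParity ∈ S := by
  induction q with
  | nil =>
    simpa using edgeParity_add_edgeParity_mem hω hP hlight hhorton z _ (by simpa using hW)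
  | @cons a c b h q ih =>
    rw [walkWeight_cons] at hW
    have hzc : walkWeight ω (P z c) ≤ walkWeight ω (P z a) + ω s(a, c) := by
      simpa [walkWeight_append, walkWeight_cons] using hP z c ((P z a).append (cons h nil))
    have hcz : walkWeight ω (P c z) ≤ walkWeight ω q + walkWeight ω (P b z) := by
      simpa [walkWeight_append] using hP c z (q.append (P b z))
    have hT := hhorton z a c h (by
      rw [hortonWalk, walkWeight_append, walkWeight_cons]
      linarith)
    have hA := edgeParity_add_edgeParity_mem hω hP hlight hhorton z c (by linarith)
    convert S.add_mem (S.add_mem hT (ih (by linarith))) hA using 1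
    rw [hortonWalk, edgeParity_append, edgeParity_cons, edgeParity_cons]
    linear_combination
      -ZModModule.add_self (P z c).edgeParity - ZModModule.add_self (P c z).edgeParity

end Sweep

theorem edgeParity_mem_hortonSpan_of_lighter (hω : ∀ e ∈ G.edgeSet, 0 < ω e)
    (hP : ∀ (x y : V) (q : G.Walk x y), walkWeight ω (P x y) ≤ walkWeight ω q)
    {z : V} (c : G.Walk z z)
    (ih : ∀ (v : V) (c' : G.Walk v v), c'.IsCycle → walkWeight ω c' < walkWeight ω c →
      c'.edgeParity ∈ hortonSpan ω P (walkWeight ω c')) :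
    c.edgeParity ∈ hortonSpan ω P (walkWeight ω c) := by
  have hcycles : ∀ (v : V) (c' : G.Walk v v), c'.IsCycle →
      walkWeight ω c' < walkWeight ω c → c'.edgeParity ∈ hortonSpan ω P (walkWeight ω c) :=
    fun v c' hc' hlt => hortonSpan_mono hlt.le (ih v c' hc' hlt)
  have hlight : ∀ (v : V) (R : G.Walk v v), walkWeight ω R < walkWeight ω c →
      R.edgeParity ∈ hortonSpan ω P (walkWeight ω c) := fun v R hR => by
    by_cases hRc : R.IsCycle
    · exact hcycles v R hRc hR
    · exact edgeParity_mem_of_not_isCycle hω hcycles R hRc hR.le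
  have hhorton : ∀ (z x y : V) (h : G.Adj x y),
      walkWeight ω (hortonWalk P z x y h) ≤ walkWeight ω c →
      (hortonWalk P z x y h).edgeParity ∈ hortonSpan ω P (walkWeight ω c) := by
    intro z x y h hW
    by_cases hH : (hortonWalk P z x y h).IsCycle
    · exact edgeParity_hortonWalk_mem_hortonSpan hH hW
    · exact edgeParity_mem_of_not_isCycle hω hcycles _ hH hW
  have hPzz : P z z = nil :=
    (not_not.mp fun hn => (walkWeight_pos hω hn).not_ge (by simpa using hP z z nil)).eq_nil
  simpa [hPzz] using edgeParity_add_add_mem hω hP hlight hhorton z c (by simp [hPzz])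

theorem edgeIndicator_mem_hortonSpan [Finite V] (hω : ∀ e ∈ G.edgeSet, 0 < ω e)
    (hP : ∀ (x y : V) (q : G.Walk x y), walkWeight ω (P x y) ≤ walkWeight ω q)
    (F : Finset (Sym2 V)) (hF : IsCycleEdgeSet G F) :
    edgeIndicator F ∈ hortonSpan ω P (∑ e ∈ F, ω e) := by
  have hwf : WellFounded fun F F' : Finset (Sym2 V) => ∑ e ∈ F, ω e < ∑ e ∈ F', ω e :=
    Finite.wellFounded_of_trans_of_irrefl _
  induction F using hwf.induction with
  | _ F ih =>
  obtain ⟨z, c, hc, rfl⟩ := hF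
  rw [← hc.isTrail.edgeParity_eq, ← hc.isTrail.walkWeight_eq]
  refine edgeParity_mem_hortonSpan_of_lighter hω hP c fun v c' hc' hlt => ?_
  rw [hc'.isTrail.edgeParity_eq, hc'.isTrail.walkWeight_eq]
  rw [hc'.isTrail.walkWeight_eq, hc.isTrail.walkWeight_eq] at hlt
  exact ih _ hlt ⟨v, c', hc', rfl⟩

theorem exists_isCycleBasis [Finite V] (G : SimpleGraph V) : ∃ B, IsCycleBasis G B := by
  obtain ⟨b, hbC, -, hspan, hind⟩ := exists_linearIndepOn_extension (K := ZMod 2)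
    (v := edgeIndicator) (linearIndepOn_empty _ _) (Set.empty_subset {F | IsCycleEdgeSet G F})
  refine ⟨(Set.toFinite b).toFinset, fun F hF => hbC ((Set.toFinite b).mem_toFinset.mp hF),
    by rw [← (Set.toFinite b).coe_toFinset] at hind; exact hind, le_antisymm ?_ ?_⟩
  · rw [Set.Finite.coe_toFinset, span_le]
    rintro _ ⟨F, hF, rfl⟩
    exact edgeIndicator_mem_cycleSpace (hbC hF)
  · rw [Set.Finite.coe_toFinset, cycleSpace, span_le]
    rintro _ ⟨F, hF, rfl⟩
    exact hspan ⟨F, hF, rfl⟩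

end Horton

theorem horton_contains_minWeight_cycleBasis_general
    (G : SimpleGraph V) (ω : Sym2 V → ℝ)
    (hω : ∀ e ∈ G.edgeSet, 0 < ω e)
    (P : ∀ x y : V, G.Walk x y)
    (hPmin : ∀ (x y : V) (q : G.Walk x y), q.IsPath →
      walkWeight ω (P x y) ≤ walkWeight ω q) :
    ∃ B : Finset (Finset (Sym2 V)),
      (∀ F ∈ B, ∃ (z x y : V) (h : G.Adj x y),
        (hortonWalk P z x y h).IsCycle ∧ F = (hortonWalk P z x y h).edges.toFinset) ∧
      IsCycleBasis G B ∧
      ∀ B' : Finset (Finset (Sym2 V)), IsCycleBasis G B' →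
        basisWeight ω B ≤ basisWeight ω B' := by
  classical
  have hP x y := walkWeight_le_of_forall_isPath (fun e he => (hω e he).le) (hPmin x y)
  obtain ⟨B₀, hB₀⟩ := exists_isCycleBasis G
  obtain ⟨B, hB, hBmin⟩ := (Finset.univ.filter (IsCycleBasis G)).exists_min_image
    (basisWeight ω) ⟨B₀, by simpa using hB₀⟩
  obtain ⟨hBcyc, hBind, hBspan⟩ := (Finset.mem_filter.mp hB).2
  obtain ⟨B', hB'T, hB'ind, hB'span, hB'w⟩ :=
    LinearIndepOn.exists_subset_sum_le_of_mem_span (fun F => ∑ e ∈ F, ω e)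
      {F | IsHortonCycle P F} B hBind
      (fun F hF => hBspan ▸ edgeIndicator_mem_cycleSpace hF.isCycleEdgeSet)
      (fun F hF => edgeIndicator_mem_hortonSpan hω hP F (hBcyc F hF))
  refine ⟨B', fun F hF => hB'T hF, ⟨fun F hF => (hB'T hF).isCycleEdgeSet, hB'ind,
    hB'span.trans hBspan⟩, fun B'' hB'' => hB'w.trans (hBmin B'' (by simpa using hB''))⟩

/-- **Horton's theorem.** Let `G` be a finite connected simple graph with
positive real edge weights, and for each pair of vertices fix a minimum-weight path `P x y`
between them.  For each vertex `z` and each edge `e = {x, y}`, let `C(z, e)` be the closed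
walk formed by `P z x`, the edge `e`, and `P y z`.  Then the set of all such `C(z, e)` that
are simple cycles contains a minimum-weight cycle basis of `G`. -/
theorem horton_contains_minWeight_cycleBasis
    (G : SimpleGraph V) (hG : G.Connected) (ω : Sym2 V → ℝ)
    (hω : ∀ e ∈ G.edgeSet, 0 < ω e)
    (P : ∀ x y : V, G.Walk x y) (hP : ∀ x y : V, (P x y).IsPath)
    (hPmin : ∀ (x y : V) (q : G.Walk x y), q.IsPath →
      walkWeight ω (P x y) ≤ walkWeight ω q) :
    ∃ B : Finset (Finset (Sym2 V)),
      (∀ F ∈ B, ∃ (z x y : V) (h : G.Adj x y),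
        (hortonWalk P z x y h).IsCycle ∧ F = (hortonWalk P z x y h).edges.toFinset) ∧
      IsCycleBasis G B ∧
      ∀ B' : Finset (Finset (Sym2 V)), IsCycleBasis G B' →
        basisWeight ω B ≤ basisWeight ω B' :=
  horton_contains_minWeight_cycleBasis_general G ω hω P hPmin
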